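/- arXiv:1505.02368 — 3 statements merged into one kernel-verified Lean document; each statement's English description precedes it below -/
import Mathlib

section
/- For k > 0 real, p > 0, m ∈ ℕ with m ≥ 1, and b ∈ ℝ with b ≥ 0, the integral ∫_0^∞ x^{k-1} · Q_m(0, b√x) · e^{-p x} dx equals (2/(b²+2p))^k · Σ_{l=0}^{m-1} (b²/(b²+2p))^l · Γ(k+l)/l!. -/
open Real Filter MeasureTheory Set

/-- Upper incomplete gamma function Γ(s, x) = ∫ₓ^∞ t^(s-1) e^(-t) dt. -/
noncomputable def uGamma (s x : ℝ) : ℝ := ∫ t in Set.Ioi x, t ^ (s - 1) * Real.exp (-t)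

/-- Lower incomplete gamma function γ(s, x) = ∫₀ˣ t^(s-1) e^(-t) dt. -/
noncomputable def lGamma (s x : ℝ) : ℝ := ∫ t in (0:ℝ)..x, t ^ (s - 1) * Real.exp (-t)

/-- Generalized Marcum Q-function of integer order m, via the standard
noncentral chi-square tail representation
Q_m(a,b) = e^{-a²/2} Σₙ (a²/2)ⁿ/n! · Γ(m+n, b²/2)/Γ(m+n). -/
noncomputable def marcumQ (m : ℕ) (a b : ℝ) : ℝ :=
  Real.exp (-(a ^ 2) / 2) *
    ∑' n : ℕ, (a ^ 2 / 2) ^ n / (Nat.factorial n) *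
      (uGamma ((m : ℝ) + n) (b ^ 2 / 2) / Real.Gamma ((m : ℝ) + n))

/-- Modified Bessel function of the first kind, by its series. -/
noncomputable def besselI (ν x : ℝ) : ℝ :=
  ∑' j : ℕ, (x / 2) ^ (ν + 2 * (j : ℝ)) / ((Nat.factorial j) * Real.Gamma (ν + j + 1))

/-!
At `a = 0` the Marcum function is a Poisson tail: since `t ^ n * e^(-t) / n!` is the derivative
of `-e^(-t) * ∑_{l ≤ n} t ^ l / l!`, we get `Q_m(0, c) = e^(-y) ∑_{l < m} y ^ l / l!` with
`y = c² / 2`. With `c = b √x` the integrand becomes a finite sum of Gamma integrands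
`x ^ (k + l - 1) * e^(-(b² / 2 + p) x)`, each integrating to `Γ(k + l) / (b² / 2 + p) ^ (k + l)`.
-/

open Finset

theorem hasDerivAt_sum_range_succ_pow_div_factorial (n : ℕ) (t : ℝ) :
    HasDerivAt (fun t : ℝ => ∑ l ∈ range (n + 1), t ^ l / l.factorial)
      (∑ l ∈ range n, t ^ l / l.factorial) t := by
  induction n with
  | zero => simpa using hasDerivAt_const t (1 : ℝ)
  | succ n ih =>
    simp only [sum_range_succ _ (n + 1)]
    refine (ih.add ((hasDerivAt_pow (n + 1) t).div_const ((n + 1).factorial : ℝ))).congr_deriv ?_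
    rw [sum_range_succ, Nat.factorial_succ]
    push_cast
    field_simp

theorem uGamma_natCast_add_one (n : ℕ) {x : ℝ} (hx : 0 ≤ x) :
    uGamma (n + 1) x = n.factorial * (exp (-x) * ∑ l ∈ range (n + 1), x ^ l / l.factorial) := by
  set F : ℝ → ℝ := fun t => -(n.factorial * (exp (-t) * ∑ l ∈ range (n + 1), t ^ l / l.factorial))
  have hF : ∀ t ∈ Ici x, HasDerivAt F (t ^ n * exp (-t)) t := by
    intro t _
    have hS := hasDerivAt_sum_range_succ_pow_div_factorial n t
    refine ((((hasDerivAt_neg' t).exp.mul hS).const_mul (n.factorial : ℝ)).neg).congr_deriv ?_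
    rw [sum_range_succ]
    field_simp
    ring
  have hF_lim : Tendsto F atTop (nhds 0) := by
    have := ((tendsto_finsetSum (range (n + 1)) fun l _ =>
      (tendsto_pow_mul_exp_neg_atTop_nhds_zero l).div_const (l.factorial : ℝ)).const_mul
        (n.factorial : ℝ)).neg
    simp only [sum_const_zero, zero_div, mul_zero, neg_zero] at this
    refine this.congr fun t => ?_
    simp only [F, mul_sum]
    congr 1
    exact sum_congr rfl fun l _ => by ring
  have hnonneg : ∀ t ∈ Ioi x, 0 ≤ t ^ n * exp (-t) := fun t ht =>
    mul_nonneg (pow_nonneg (hx.trans ht.le) n) (exp_nonneg _)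
  have hrpow : ∀ t : ℝ, t ^ ((n : ℝ) + 1 - 1) = t ^ n := fun t => by
    rw [add_sub_cancel_right, rpow_natCast]
  simp only [uGamma, hrpow, integral_Ioi_of_hasDerivAt_of_nonneg' hF hnonneg hF_lim, F]
  ring

/-- For `m = 0` both sides vanish, since `Real.Gamma 0 = 0` and `x / 0 = 0`. -/
theorem marcumQ_zero_left (m : ℕ) (c : ℝ) :
    marcumQ m 0 c = exp (-(c ^ 2 / 2)) * ∑ l ∈ range m, (c ^ 2 / 2) ^ l / l.factorial := by
  rw [marcumQ, tsum_eq_single 0 fun j hj => by simp [zero_pow hj]]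
  cases m with
  | zero => simp
  | succ n =>
    push_cast
    rw [add_zero, uGamma_natCast_add_one n (by positivity : 0 ≤ c ^ 2 / 2), Gamma_nat_eq_factorial]
    simp [Nat.factorial_ne_zero]

theorem integral_rpow_mul_exp_neg_mul_sum_range_pow_div_factorial {k a p : ℝ} (hk : 0 < k)
    (hap : 0 < a + p) (m : ℕ) :
    ∫ x in Ioi (0 : ℝ),
        x ^ (k - 1) * (exp (-(a * x)) * ∑ l ∈ range m, (a * x) ^ l / l.factorial) * exp (-(p * x)) =
      (1 / (a + p)) ^ k * ∑ l ∈ range m, (a / (a + p)) ^ l * Gamma (k + l) / l.factorial := by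
  have hk_add (l : ℕ) : 0 < k + l := by positivity
  have hexpand : ∀ x ∈ Ioi (0 : ℝ),
      x ^ (k - 1) * (exp (-(a * x)) * ∑ l ∈ range m, (a * x) ^ l / l.factorial) * exp (-(p * x)) =
        ∑ l ∈ range m, a ^ l / l.factorial * (x ^ (k + l - 1) * exp (-((a + p) * x))) := by
    intro x hx
    have hpow (l : ℕ) : x ^ (k + l - 1) = x ^ (k - 1) * x ^ l := by
      rw [← rpow_natCast, ← rpow_add hx]
      ring_nf
    simp only [mul_sum, sum_mul, hpow, add_mul, neg_add, exp_add]
    exact sum_congr rfl fun l _ => by ring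
  have hintegrable (l : ℕ) :
      IntegrableOn (fun x : ℝ => x ^ (k + l - 1) * exp (-((a + p) * x))) (Ioi 0) := by
    simpa only [rpow_one, neg_mul] using
      integrableOn_rpow_mul_exp_neg_mul_rpow (s := k + l - 1) (by linarith [hk_add l]) one_pos hap
  rw [setIntegral_congr_fun measurableSet_Ioi hexpand,
    integral_finsetSum _ fun l _ => (hintegrable l).const_mul _, mul_sum]
  refine sum_congr rfl fun l _ => ?_
  rw [integral_const_mul, integral_rpow_mul_exp_neg_mul_Ioi (hk_add l) hap,
    rpow_add (by positivity), rpow_natCast, div_pow, div_pow, one_pow]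
  field_simp

theorem integral_marcumQ_a_eq_zero_general (k p b : ℝ) (hk : 0 < k) (hp : 0 < p)
    (m : ℕ) :
    ∫ x in Set.Ioi (0 : ℝ),
        x ^ (k - 1) * marcumQ m 0 (b * Real.sqrt x) * Real.exp (-(p * x)) =
      (2 / (b ^ 2 + 2 * p)) ^ k *
        ∑ l ∈ Finset.range m,
          (b ^ 2 / (b ^ 2 + 2 * p)) ^ l * Real.Gamma (k + l) / (Nat.factorial l) := by
  have hmarcumQ : ∀ x ∈ Ioi (0 : ℝ), marcumQ m 0 (b * √x) =
      exp (-(b ^ 2 / 2 * x)) * ∑ l ∈ range m, (b ^ 2 / 2 * x) ^ l / l.factorial := by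
    intro x hx
    rw [marcumQ_zero_left, mul_pow, sq_sqrt (le_of_lt hx), mul_div_right_comm]
  have hinv : 1 / (b ^ 2 / 2 + p) = 2 / (b ^ 2 + 2 * p) := by field_simp
  have hratio : b ^ 2 / 2 / (b ^ 2 / 2 + p) = b ^ 2 / (b ^ 2 + 2 * p) := by field_simp
  calc _ = ∫ x in Ioi (0 : ℝ), x ^ (k - 1) *
          (exp (-(b ^ 2 / 2 * x)) * ∑ l ∈ range m, (b ^ 2 / 2 * x) ^ l / l.factorial) *
            exp (-(p * x)) :=
        setIntegral_congr_fun measurableSet_Ioi fun x hx => by rw [hmarcumQ x hx]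
    _ = _ := by
      rw [integral_rpow_mul_exp_neg_mul_sum_range_pow_div_factorial hk (by positivity), hinv,
        hratio]

theorem integral_marcumQ_a_eq_zero (k p b : ℝ) (hk : 0 < k) (hp : 0 < p)
    (m : ℕ) (hm : 1 ≤ m) (hb : 0 ≤ b) :
    ∫ x in Set.Ioi (0 : ℝ),
        x ^ (k - 1) * marcumQ m 0 (b * Real.sqrt x) * Real.exp (-(p * x)) =
      (2 / (b ^ 2 + 2 * p)) ^ k *
        ∑ l ∈ Finset.range m,
          (b ^ 2 / (b ^ 2 + 2 * p)) ^ l * Real.Gamma (k + l) / (Nat.factorial l) :=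
  integral_marcumQ_a_eq_zero_general k p b hk hp m
end

section
/- For m ∈ ℕ with m ≥ 1, real α > 0 and β ≥ 0, ∫_0^∞ x^m e^{-α x²} I_{m-1}(β x) dx = (β^{m-1}/(2α)^m) e^{β²/(4α)}. -/
open Real Filter MeasureTheory Set

lemma real_exp_tsum (x : ℝ) : Real.exp x = ∑' n : ℕ, x ^ n / (Nat.factorial n) := by
  rw [Real.exp_eq_exp_ℝ, NormedSpace.exp_eq_tsum_div]

lemma gauss_moment {α s : ℝ} (hα : 0 < α) (hs : -1 < s) :
    ∫ x in Set.Ioi (0:ℝ), x ^ s * Real.exp (-(α * x ^ 2)) =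
      α ^ (-(s + 1) / 2) * (1 / 2) * Real.Gamma ((s + 1) / 2) := by
  have := integral_rpow_mul_exp_neg_mul_rpow (p := 2) (q := s) (b := α) two_pos hs hα
  rw [← this]
  refine setIntegral_congr_fun measurableSet_Ioi fun x hx => ?_
  rw [Real.rpow_two, neg_mul]

theorem integral_power_exp_besselI (m : ℕ) (hm : 1 ≤ m) (α β : ℝ) (hα : 0 < α) (hβ : 0 ≤ β) :
    ∫ x in Set.Ioi (0 : ℝ),
        x ^ m * Real.exp (-(α * x ^ 2)) * besselI ((m : ℝ) - 1) (β * x) =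
      (β ^ (m - 1) / (2 * α) ^ m) * Real.exp (β ^ 2 / (4 * α)) := by
  set ν : ℝ := (m : ℝ) - 1 with hν
  have hν0 : 0 ≤ ν := by
    have : (1 : ℝ) ≤ (m : ℝ) := by exact_mod_cast hm
    linarith
  rcases eq_or_lt_of_le hβ with hβ0 | hβpos
  · -- β = 0 case
    subst hβ0
    simp only [zero_mul]
    rcases eq_or_lt_of_le hm with h1 | h2
    · subst h1
      have hb : besselI (((1:ℕ):ℝ) - 1) 0 = 1 := by
        have h0 : ((1:ℕ):ℝ) - 1 = 0 := by norm_num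
        rw [h0, besselI]
        rw [tsum_eq_single 0 ?_]
        · norm_num [Real.rpow_zero, Real.Gamma_one]
        · intro j hj
          have hz : (0:ℝ)/2 = 0 := by norm_num
          have hje : (0:ℝ) + 2 * (j:ℝ) ≠ 0 := by
            have : (1:ℝ) ≤ (j:ℝ) := by exact_mod_cast Nat.one_le_iff_ne_zero.mpr hj
            positivity
          rw [hz, Real.zero_rpow hje, zero_div]
      simp only [hν, hb, mul_one, pow_one]
      have hg := gauss_moment hα (s := 1) (by norm_num)
      simp_rw [Real.rpow_one] at hg
      rw [hg]
      have : ((1:ℝ) + 1) / 2 = 1 := by norm_num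
      rw [show (-(1+1:ℝ))/2 = -1 by norm_num, this, Real.Gamma_one, Real.rpow_neg_one]
      norm_num
    · have hb : besselI ((m:ℝ) - 1) 0 = 0 := by
        rw [besselI]
        convert tsum_zero with j
        have hz : (0:ℝ)/2 = 0 := by norm_num
        have hm1 : (1:ℝ) < (m:ℝ) := by exact_mod_cast h2
        have hje : (m:ℝ) - 1 + 2 * (j:ℝ) ≠ 0 := by
          have : (0:ℝ) ≤ (j:ℝ) := Nat.cast_nonneg j
          nlinarith
        rw [hz, Real.zero_rpow hje, zero_div]
      simp only [hν, hb, mul_zero, integral_zero]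
      rw [zero_pow (by omega : m - 1 ≠ 0)]
      simp
  -- β > 0
  have hβ2 : 0 < β / 2 := by linarith
  set F : ℕ → ℝ → ℝ := fun j x =>
    ((β / 2) ^ (ν + 2 * (j : ℝ)) / ((Nat.factorial j) * Real.Gamma (ν + j + 1))) *
      (x ^ ((m : ℝ) + (ν + 2 * (j : ℝ))) * Real.exp (-α * x ^ 2)) with hF
  have hΓpos : ∀ j : ℕ, 0 < Real.Gamma (ν + j + 1) := by
    intro j
    apply Real.Gamma_pos_of_pos
    positivity
  have hΓeq : ∀ j : ℕ, ν + (j : ℝ) + 1 = (m : ℝ) + j := by intro j; rw [hν]; ring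
  have hs : ∀ j : ℕ, (-1 : ℝ) < (m : ℝ) + (ν + 2 * (j : ℝ)) := by
    intro j
    have : (1 : ℝ) ≤ (m : ℝ) := by exact_mod_cast hm
    have : (0 : ℝ) ≤ (j : ℝ) := Nat.cast_nonneg j
    nlinarith [hν0]
  -- step 1: rewrite integrand as a tsum
  have step1 : ∫ x in Set.Ioi (0 : ℝ),
      x ^ m * Real.exp (-(α * x ^ 2)) * besselI ((m : ℝ) - 1) (β * x) =
      ∫ x in Set.Ioi (0 : ℝ), ∑' j : ℕ, F j x := by
    refine setIntegral_congr_fun measurableSet_Ioi fun x hx => ?_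
    have hx0 : (0 : ℝ) < x := hx
    rw [besselI, ← tsum_mul_left]
    refine tsum_congr fun j => ?_
    have h1 : β * x / 2 = (β / 2) * x := by ring
    rw [hF]
    simp only [← hν]
    rw [h1, Real.mul_rpow hβ2.le hx0.le]
    have hxm : x ^ ((m : ℝ) + (ν + 2 * (j : ℝ))) = x ^ m * x ^ (ν + 2 * (j : ℝ)) := by
      rw [Real.rpow_add hx0, Real.rpow_natCast]
    rw [hxm, neg_mul]
    ring
  -- integrability of each term
  have hint : ∀ j : ℕ, Integrable (F j) (volume.restrict (Set.Ioi (0 : ℝ))) := by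
    intro j
    exact ((integrableOn_rpow_mul_exp_neg_mul_sq hα (hs j)).const_mul _)
  -- value of each integral
  have key : ∀ j : ℕ, ∫ x in Set.Ioi (0 : ℝ), F j x =
      (β / 2) ^ (ν + 2 * (j : ℝ)) * (α ^ (-((m : ℝ) + (j : ℝ))) / 2) / (Nat.factorial j) := by
    intro j
    rw [hF]
    simp only
    rw [MeasureTheory.integral_const_mul]
    have : ∫ x in Set.Ioi (0:ℝ), x ^ ((m : ℝ) + (ν + 2 * (j : ℝ))) * Real.exp (-α * x ^ 2) =
        α ^ (-((m : ℝ) + (ν + 2 * (j : ℝ)) + 1) / 2) * (1 / 2) *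
          Real.Gamma (((m : ℝ) + (ν + 2 * (j : ℝ)) + 1) / 2) := by
      have := gauss_moment hα (hs j)
      simp_rw [neg_mul] at this ⊢
      exact this
    rw [this]
    have he : ((m : ℝ) + (ν + 2 * (j : ℝ)) + 1) / 2 = (m : ℝ) + j := by rw [hν]; ring
    have he2 : -((m : ℝ) + (ν + 2 * (j : ℝ)) + 1) / 2 = -((m : ℝ) + (j : ℝ)) := by rw [hν]; ring
    rw [he, he2, ← hΓeq j]
    have hΓ := (hΓpos j).ne'
    have hfac : (0:ℝ) < (Nat.factorial j : ℝ) := by exact_mod_cast j.factorial_pos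
    field_simp
  -- per-term simplification
  have term_eq : ∀ j : ℕ,
      (β / 2) ^ (ν + 2 * (j : ℝ)) * (α ^ (-((m : ℝ) + (j : ℝ))) / 2) / (Nat.factorial j) =
      ((β / 2) ^ ν * α ^ (-(m : ℝ)) / 2) * ((β ^ 2 / (4 * α)) ^ j / (Nat.factorial j)) := by
    intro j
    have h1 : (β / 2) ^ (ν + 2 * (j : ℝ)) = (β / 2) ^ ν * ((β / 2) ^ 2) ^ j := by
      rw [Real.rpow_add hβ2]
      congr 1
      rw [show (2 : ℝ) * (j : ℝ) = ((2 * j : ℕ) : ℝ) by push_cast; ring,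
        Real.rpow_natCast, pow_mul]
    have h2 : α ^ (-((m : ℝ) + (j : ℝ))) = α ^ (-(m : ℝ)) * (α⁻¹) ^ j := by
      rw [show -((m : ℝ) + (j : ℝ)) = -(m : ℝ) + (-(j : ℝ)) by ring, Real.rpow_add hα]
      congr 1
      rw [Real.rpow_neg hα.le, Real.rpow_natCast, ← inv_pow]
    have h3 : ((β / 2) ^ 2) ^ j * (α⁻¹) ^ j = (β ^ 2 / (4 * α)) ^ j := by
      rw [← mul_pow]
      congr 1
      field_simp
      norm_num
    rw [h1, h2, ← h3]
    ring
  -- summability of the integrals of norms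
  have hnorm : ∀ j : ℕ, ∫ x in Set.Ioi (0:ℝ), ‖F j x‖ = ∫ x in Set.Ioi (0:ℝ), F j x := by
    intro j
    refine setIntegral_congr_fun measurableSet_Ioi fun x hx => ?_
    have hx0 : (0:ℝ) < x := hx
    have : 0 ≤ F j x := by
      rw [hF]
      have := (hΓpos j).le
      positivity
    exact Real.norm_of_nonneg this
  have hsum : Summable fun j : ℕ => ∫ x in Set.Ioi (0:ℝ), ‖F j x‖ := by
    simp_rw [hnorm, key, term_eq]
    exact (Real.summable_pow_div_factorial _).mul_left _
  rw [step1, ← MeasureTheory.integral_tsum_of_summable_integral_norm hint hsum]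
  simp_rw [key, term_eq]
  rw [tsum_mul_left, ← real_exp_tsum]
  -- final algebra
  have hm' : ((m - 1 : ℕ) : ℝ) = ν := by
    rw [hν, Nat.cast_sub hm, Nat.cast_one]
  have hA : (β / 2) ^ ν = β ^ (m - 1) / 2 ^ (m - 1) := by
    rw [← hm', Real.rpow_natCast, div_pow]
  have hB : α ^ (-(m : ℝ)) = (α ^ m)⁻¹ := by
    rw [Real.rpow_neg hα.le, Real.rpow_natCast]
  rw [hA, hB]
  have h2m : (2:ℝ) ^ (m - 1) * 2 = 2 ^ m := by
    rw [← pow_succ]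
    congr 1
    omega
  have : (2 * α) ^ m = 2 ^ m * α ^ m := mul_pow 2 α m
  rw [this, ← h2m]
  have h2 : (0:ℝ) < 2 ^ (m - 1) := by positivity
  have hαm : (0:ℝ) < α ^ m := by positivity
  field_simp
end

section
/- For p > 0, m ≥ 1 integer, a > 0 and b > 0, ∫_0^∞ Q_m(a, b√x) e^{-px} dx = (1/p) - (b^{2m} e^{-a²/2} / (p (b²+2p)^m)) · ₁F₁(m; m; a²b²/(2b²+4p)), and since ₁F₁(m; m; z) = e^z, this equals (1/p) · [1 - (b²/(b²+2p))^m · exp(-a² p/(b²+2p))]. -/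
open Real Filter MeasureTheory Set Topology

lemma exp_tsum (x : ℝ) : ∑' n : ℕ, x ^ n / n.factorial = Real.exp x := by
  rw [Real.exp_eq_exp_ℝ, NormedSpace.exp_eq_tsum_div]

lemma sum_hasDerivAt (k : ℕ) (t : ℝ) :
    HasDerivAt (fun t : ℝ => ∑ j ∈ Finset.range (k+1), t ^ j / j.factorial)
      (∑ j ∈ Finset.range k, t ^ j / j.factorial) t := by
  have h1 : ∀ s : ℝ, ∑ j ∈ Finset.range (k+1), s ^ j / j.factorial
      = (∑ j ∈ Finset.range k, s ^ (j+1) / (j+1).factorial) + 1 := by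
    intro s
    rw [Finset.sum_range_succ']
    simp
  simp only [h1]
  have h2 : ∀ j ∈ Finset.range k, HasDerivAt (fun s : ℝ => s ^ (j+1) / ((j+1).factorial : ℝ))
      (((j+1 : ℕ) : ℝ) * t ^ j / ((j+1).factorial : ℝ)) t := by
    intro j _
    exact (hasDerivAt_pow (j+1) t).div_const _
  have := (HasDerivAt.fun_sum h2).add_const 1
  refine HasDerivAt.congr_deriv this (Eq.symm ?_)
  refine (Finset.sum_congr rfl fun j _ => ?_)
  rw [Nat.factorial_succ]
  have : ((j+1 : ℕ) : ℝ) ≠ 0 := by positivity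
  push_cast
  field_simp

lemma uGamma_succ (k : ℕ) {y : ℝ} (hy : 0 < y) :
    uGamma (k+1 : ℕ) y = (k.factorial : ℝ) *
      (Real.exp (-y) * ∑ j ∈ Finset.range (k+1), y ^ j / j.factorial) := by
  have hint : IntegrableOn (fun t : ℝ => t ^ k * Real.exp (-t)) (Ioi y) := by
    have := Real.GammaIntegral_convergent (s := (k+1 : ℝ)) (by positivity)
    have h2 : IntegrableOn (fun t : ℝ => Real.exp (-t) * t ^ ((k+1 : ℝ) - 1)) (Ioi y) :=
      this.mono_set (Ioi_subset_Ioi hy.le)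
    refine h2.congr_fun (fun t ht => ?_) measurableSet_Ioi
    rw [show (k+1 : ℝ) - 1 = (k : ℕ) by push_cast; ring]
    simp only [Real.rpow_natCast]
    ring
  have key : ∫ t in Ioi y, t ^ k * Real.exp (-t)
      = 0 - (-(k.factorial : ℝ) * (Real.exp (-y) * ∑ j ∈ Finset.range (k+1), y ^ j / j.factorial)) := by
    refine integral_Ioi_of_hasDerivAt_of_tendsto' (f := fun t =>
      -(k.factorial : ℝ) * (Real.exp (-t) * ∑ j ∈ Finset.range (k+1), t ^ j / j.factorial)) ?_ hint ?_
    · intro t _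
      have hexp : HasDerivAt (fun t : ℝ => Real.exp (-t)) (-Real.exp (-t)) t := by
        simpa using (hasDerivAt_neg t).exp
      have := ((hexp.mul (sum_hasDerivAt k t)).const_mul (-(k.factorial : ℝ)))
      refine HasDerivAt.congr_deriv this (Eq.symm ?_)
      rw [Finset.sum_range_succ]
      have hk : (k.factorial : ℝ) ≠ 0 := by positivity
      field_simp
      ring
    · have : Tendsto (fun t : ℝ => Real.exp (-t) * ∑ j ∈ Finset.range (k+1), t ^ j / j.factorial)
          atTop (𝓝 0) := by
        have : Tendsto (fun t : ℝ => ∑ j ∈ Finset.range (k+1), t ^ j / j.factorial * Real.exp (-t))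
            atTop (𝓝 (∑ j ∈ Finset.range (k+1), (0:ℝ))) := by
          refine tendsto_finset_sum _ (fun j _ => ?_)
          have := (tendsto_pow_mul_exp_neg_atTop_nhds_zero j).div_const (j.factorial : ℝ)
          simpa [div_mul_eq_mul_div, zero_div] using this
        simpa [Finset.mul_sum, mul_comm, Finset.sum_const, mul_div_assoc] using this
      simpa using this.const_mul (-(k.factorial : ℝ))
  have : uGamma (k+1 : ℕ) y = ∫ t in Ioi y, t ^ k * Real.exp (-t) := by
    unfold uGamma
    refine setIntegral_congr_fun measurableSet_Ioi (fun t ht => ?_)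
    rw [show ((k+1 : ℕ) : ℝ) - 1 = (k : ℕ) by push_cast; ring, Real.rpow_natCast]
  rw [this, key]
  ring

lemma integrableOn_pow_mul_exp {q : ℝ} (hq : 0 < q) (j : ℕ) :
    IntegrableOn (fun x : ℝ => x ^ j * Real.exp (-(q * x))) (Ioi 0) := by
  have := integrableOn_rpow_mul_exp_neg_mul_rpow (p := 1) (s := (j : ℝ)) (b := q)
    (lt_of_lt_of_le (by norm_num) (Nat.cast_nonneg j)) one_pos hq
  refine this.congr_fun (fun x hx => ?_) measurableSet_Ioi
  simp only [Real.rpow_one, Real.rpow_natCast, neg_mul]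

lemma integral_pow_mul_exp {q : ℝ} (hq : 0 < q) (j : ℕ) :
    ∫ x in Ioi (0:ℝ), x ^ j * Real.exp (-(q * x)) = (j.factorial : ℝ) / q ^ (j+1) := by
  have := Real.integral_rpow_mul_exp_neg_mul_Ioi (a := (j + 1 : ℝ)) (r := q)
    (by positivity) hq
  rw [show (j + 1 : ℝ) - 1 = (j : ℕ) by push_cast; ring, Real.Gamma_nat_eq_factorial,
    show ((j:ℝ) + 1) = ((j + 1 : ℕ) : ℝ) by push_cast; ring, Real.rpow_natCast] at this
  have heq : ∫ x in Ioi (0:ℝ), x ^ j * Real.exp (-(q * x))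
      = ∫ t in Ioi (0:ℝ), t ^ ((j : ℕ) : ℝ) * Real.exp (-(q * t)) := by
    refine setIntegral_congr_fun measurableSet_Ioi (fun t ht => ?_)
    rw [Real.rpow_natCast]
  rw [heq, this, div_pow, one_pow]
  field_simp

lemma expsum_congr {b p : ℝ} (N : ℕ) {x : ℝ} :
    (Real.exp (-(b^2*x/2)) * ∑ j ∈ Finset.range N, (b^2*x/2)^j / j.factorial)
        * Real.exp (-(p*x))
      = ∑ j ∈ Finset.range N, (b^2/2)^j / j.factorial * (x^j * Real.exp (-((p + b^2/2)*x))) := by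
  have hexp : Real.exp (-(b^2*x/2)) * Real.exp (-(p*x)) = Real.exp (-((p + b^2/2)*x)) := by
    rw [← Real.exp_add]; congr 1; ring
  rw [Finset.mul_sum, Finset.sum_mul]
  refine Finset.sum_congr rfl fun j _ => ?_
  rw [show Real.exp (-(b^2*x/2)) * ((b^2*x/2)^j / j.factorial) * Real.exp (-(p*x))
      = (b^2*x/2)^j / j.factorial * (Real.exp (-(b^2*x/2)) * Real.exp (-(p*x))) by ring, hexp,
    show b^2*x/2 = (b^2/2)*x by ring, mul_pow]
  ring

lemma integrableOn_expsum {b p : ℝ} (hb : 0 < b) (hp : 0 < p) (N : ℕ) :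
    IntegrableOn (fun x : ℝ =>
      (Real.exp (-(b^2*x/2)) * ∑ j ∈ Finset.range N, (b^2*x/2)^j / j.factorial)
        * Real.exp (-(p*x))) (Ioi 0) := by
  have : IntegrableOn (fun x : ℝ =>
      ∑ j ∈ Finset.range N, (b^2/2)^j / j.factorial * (x^j * Real.exp (-((p + b^2/2)*x))))
      (Ioi 0) :=
    integrable_finset_sum _ fun j _ => ((integrableOn_pow_mul_exp (by positivity) j).const_mul _)
  exact this.congr_fun (fun x _ => (expsum_congr N).symm) measurableSet_Ioi

lemma geo_term {c q : ℝ} (hq : q ≠ 0) (j : ℕ) :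
    c^j / (j.factorial : ℝ) * ((j.factorial : ℝ) / q^(j+1)) = 1/q * (c/q)^j := by
  have hfac : (j.factorial : ℝ) ≠ 0 := by positivity
  rw [div_pow, pow_succ]
  field_simp

lemma integral_expsum {b p : ℝ} (hb : 0 < b) (hp : 0 < p) (N : ℕ) :
    ∫ x in Ioi (0:ℝ), (Real.exp (-(b^2*x/2)) * ∑ j ∈ Finset.range N, (b^2*x/2)^j / j.factorial)
        * Real.exp (-(p*x))
      = (1/p) * (1 - (b^2/(b^2+2*p))^N) := by
  have hq0 : (0:ℝ) < p + b^2/2 := by positivity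
  have hb2p : (0:ℝ) < b^2 + 2*p := by positivity
  rw [setIntegral_congr_fun measurableSet_Ioi (fun x _ => expsum_congr N)]
  rw [integral_finset_sum _ fun j _ => ((integrableOn_pow_mul_exp hq0 j).const_mul _)]
  have hstep : ∀ j ∈ Finset.range N,
      ∫ x in Ioi (0:ℝ), (b^2/2)^j / j.factorial * (x^j * Real.exp (-((p + b^2/2)*x)))
      = 1/(p + b^2/2) * ((b^2/2)/(p + b^2/2))^j := by
    intro j _
    rw [integral_const_mul, integral_pow_mul_exp hq0 j, geo_term hq0.ne']
  have hR : (b^2/2)/(p + b^2/2) = b^2/(b^2+2*p) := by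
    rw [div_eq_div_iff hq0.ne' hb2p.ne']
    ring
  have hne1 : b^2/(b^2+2*p) ≠ 1 := by
    intro h
    rw [div_eq_one_iff_eq hb2p.ne'] at h
    linarith
  rw [Finset.sum_congr rfl hstep, ← Finset.mul_sum, hR, geom_sum_eq hne1 N]
  have h1 : (b^2/(b^2+2*p)) - 1 = -(2*p/(b^2+2*p)) := by
    field_simp
    ring
  rw [h1]
  generalize (b^2/(b^2+2*p))^N = X
  field_simp
  ring

theorem laplace_marcumQ_second_arg (m : ℕ) (hm : 1 ≤ m) (a b p : ℝ)
    (ha : 0 < a) (hb : 0 < b) (hp : 0 < p) :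
    ∫ x in Set.Ioi (0 : ℝ), marcumQ m a (b * Real.sqrt x) * Real.exp (-(p * x)) =
      (1 / p) *
        (1 - (b ^ 2 / (b ^ 2 + 2 * p)) ^ m * Real.exp (-(a ^ 2 * p) / (b ^ 2 + 2 * p))) := by
  obtain ⟨k, rfl⟩ : ∃ k, m = k + 1 := ⟨m - 1, (Nat.succ_pred_eq_of_pos hm).symm⟩
  have hb2p : (0:ℝ) < b^2 + 2*p := by positivity
  set F : ℕ → ℝ → ℝ := fun n x => Real.exp (-(a^2)/2) * ((a^2/2)^n / n.factorial) *
    ((Real.exp (-(b^2*x/2)) * ∑ j ∈ Finset.range (k+n+1), (b^2*x/2)^j / j.factorial)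
      * Real.exp (-(p*x))) with hF
  -- Step A : pointwise identity
  have hpt : ∀ x ∈ Ioi (0:ℝ),
      marcumQ (k+1) a (b * Real.sqrt x) * Real.exp (-(p * x)) = ∑' n, F n x := by
    intro x hx
    have hx0 : 0 < x := hx
    have hsq : (b * Real.sqrt x) ^ 2 = b ^ 2 * x := by
      rw [mul_pow, Real.sq_sqrt hx0.le]
    unfold marcumQ
    rw [hsq]
    rw [← tsum_mul_left, ← tsum_mul_right]
    refine tsum_congr fun n => ?_
    have hcast : (((k+1 : ℕ)) : ℝ) + (n : ℝ) = (((k+n)+1 : ℕ) : ℝ) := by push_cast; ring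
    have hy : (0:ℝ) < b^2*x/2 := by positivity
    rw [hcast, show b ^ 2 * x / 2 = b^2*x/2 from rfl, uGamma_succ (k+n) hy,
      show ((((k+n)+1 : ℕ)) : ℝ) = (((k+n : ℕ)) : ℝ) + 1 by push_cast; ring,
      Real.Gamma_nat_eq_factorial]
    have hfac : (((k+n).factorial : ℕ) : ℝ) ≠ 0 := by positivity
    rw [hF]
    simp only
    rw [mul_div_cancel_left₀ _ hfac]
    ring
  rw [setIntegral_congr_fun measurableSet_Ioi hpt]
  -- Step B : interchange sum and integral
  have hFint : ∀ n, Integrable (F n) (volume.restrict (Ioi 0)) := fun n =>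
    ((integrableOn_expsum hb hp (k+n+1)).const_mul _)
  have hval : ∀ n, ∫ x in Ioi (0:ℝ), F n x
      = Real.exp (-(a^2)/2) * ((a^2/2)^n / n.factorial)
          * ((1/p) * (1 - (b^2/(b^2+2*p))^(k+n+1))) := by
    intro n
    rw [hF]
    simp only
    rw [integral_const_mul, integral_expsum hb hp]
  have hnorm : ∀ n, ∫ x in Ioi (0:ℝ), ‖F n x‖ = ∫ x in Ioi (0:ℝ), F n x := by
    intro n
    refine integral_congr_ae ?_
    filter_upwards [self_mem_ae_restrict measurableSet_Ioi] with x hx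
    have hx0 : (0:ℝ) < x := hx
    have hsum : 0 ≤ ∑ j ∈ Finset.range (k+n+1), (b^2*x/2)^j / (j.factorial : ℝ) :=
      Finset.sum_nonneg fun j _ => div_nonneg
        (pow_nonneg (by positivity) j) (by positivity)
    rw [Real.norm_of_nonneg]
    rw [hF]
    simp only
    have h1 : (0:ℝ) ≤ (a^2/2)^n / n.factorial := by positivity
    have := Real.exp_pos (-(a^2)/2)
    have := Real.exp_pos (-(b^2*x/2))
    have := Real.exp_pos (-(p*x))
    apply mul_nonneg (mul_nonneg (by positivity) h1)
    exact mul_nonneg (mul_nonneg (by positivity) hsum) (by positivity)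
  -- summability of the integrals
  have hS1 : Summable (fun n : ℕ => (Real.exp (-(a^2)/2) * (1/p)) * ((a^2/2)^n / n.factorial)) :=
    (Real.summable_pow_div_factorial (a^2/2)).mul_left _
  have hS2 : Summable (fun n : ℕ =>
      (Real.exp (-(a^2)/2) * (1/p) * (b^2/(b^2+2*p))^(k+1)) * ((a^2*(b^2/(b^2+2*p))/2)^n / n.factorial)) :=
    (Real.summable_pow_div_factorial _).mul_left _
  have hkey : ∀ n : ℕ, Real.exp (-(a^2)/2) * ((a^2/2)^n / n.factorial)
      * ((1/p) * (1 - (b^2/(b^2+2*p))^(k+n+1)))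
      = (Real.exp (-(a^2)/2) * (1/p)) * ((a^2/2)^n / n.factorial)
        - (Real.exp (-(a^2)/2) * (1/p) * (b^2/(b^2+2*p))^(k+1)) * ((a^2*(b^2/(b^2+2*p))/2)^n / n.factorial) := by
    intro n
    have hpow : (b^2/(b^2+2*p))^(k+n+1) = (b^2/(b^2+2*p))^(k+1) * (b^2/(b^2+2*p))^n := by
      rw [← pow_add]; ring_nf
    have hpow2 : (a^2*(b^2/(b^2+2*p))/2)^n = (a^2/2)^n * (b^2/(b^2+2*p))^n := by
      rw [← mul_pow]; ring_nf
    rw [hpow, hpow2]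
    have hfac : ((n.factorial : ℕ) : ℝ) ≠ 0 := by positivity
    field_simp
  have hsummable : Summable (fun n => ∫ x in Ioi (0:ℝ), ‖F n x‖) := by
    refine (hS1.sub hS2).congr fun n => ?_
    rw [hnorm n, hval n, hkey n]
  rw [← integral_tsum_of_summable_integral_norm hFint hsummable]
  -- Step C : evaluate the sum
  calc ∑' n, ∫ x in Ioi (0:ℝ), F n x
      = ∑' n : ℕ, ((Real.exp (-(a^2)/2) * (1/p)) * ((a^2/2)^n / n.factorial)
        - (Real.exp (-(a^2)/2) * (1/p) * (b^2/(b^2+2*p))^(k+1))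
            * ((a^2*(b^2/(b^2+2*p))/2)^n / n.factorial)) := by
        refine tsum_congr fun n => ?_
        rw [hval n, hkey n]
    _ = (Real.exp (-(a^2)/2) * (1/p)) * Real.exp (a^2/2)
        - (Real.exp (-(a^2)/2) * (1/p) * (b^2/(b^2+2*p))^(k+1))
            * Real.exp (a^2*(b^2/(b^2+2*p))/2) := by
        rw [Summable.tsum_sub hS1 hS2, tsum_mul_left, tsum_mul_left, exp_tsum, exp_tsum]
    _ = (1 / p) * (1 - (b ^ 2 / (b ^ 2 + 2 * p)) ^ (k+1)
            * Real.exp (-(a ^ 2 * p) / (b ^ 2 + 2 * p))) := by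
        have e1 : Real.exp (-(a^2)/2) * Real.exp (a^2/2) = 1 := by
          rw [← Real.exp_add, show -(a^2)/2 + a^2/2 = 0 by ring, Real.exp_zero]
        have e2 : Real.exp (-(a^2)/2) * Real.exp (a^2*(b^2/(b^2+2*p))/2)
            = Real.exp (-(a^2*p)/(b^2+2*p)) := by
          rw [← Real.exp_add]
          congr 1
          field_simp
          ring
        linear_combination (1/p) * e1 - ((1/p) * (b^2/(b^2+2*p))^(k+1)) * e2
end
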